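/- (Energy dissipation for the two-dimensional dimensionally-split scheme S1.) Let N ≥ 2, Δx, Δy, Δt > 0, H : ℝ → ℝ convex and differentiable, V ∈ ℝ^{N×N}, and w : ℤ² → ℝ with w(p,q) = w(−p,q) = w(p,−q). Suppose ρⁿ, ρ^{n+1/2}, ρⁿ⁺¹, ρ**, ρ*** ∈ ℝ^{N×N} satisfy the split S1 scheme: Step 1 (x-direction): ξ^{1/2}_{ij} = H'(ρ^{n+1/2}_{ij}) + V_{ij} + ΔxΔy·∑_{k,l=1}^{N} w(i−k,j−l)ρ**_{kl}; u_{i+1/2,j} = −(ξ^{1/2}_{i+1,j} − ξ^{1/2}_{ij})/Δx; F_{i+1/2,j} = ρᴱ_{ij}u_{i+1/2,j}⁺ + ρᵂ_{i+1,j}u_{i+1/2,j}⁻, where ρᴱ, ρᵂ are the row-wise second-order minmod reconstructions (θ = 2, mesh Δx) of ρⁿ; F_{1/2,j} = F_{N+1/2,j} = 0; ρ^{n+1/2}_{ij} = ρⁿ_{ij} − (Δt/Δx)(F_{i+1/2,j} − F_{i−1/2,j}). Step 2 (y-direction): ξ^{1}_{ij} = H'(ρⁿ⁺¹_{ij}) +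 V_{ij} + ΔxΔy·∑_{k,l} w(i−k,j−l)ρ***_{kl}; v_{i,j+1/2} = −(ξ^{1}_{i,j+1} − ξ^{1}_{ij})/Δy; G_{i,j+1/2} = ρᴺ_{ij}v_{i,j+1/2}⁺ + ρˢ_{i,j+1}v_{i,j+1/2}⁻, where ρᴺ, ρˢ are the column-wise second-order minmod reconstructions (θ = 2, mesh Δy) of ρ^{n+1/2}; G_{i,1/2} = G_{i,N+1/2} = 0; ρⁿ⁺¹_{ij} = ρ^{n+1/2}_{ij} − (Δt/Δy)(G_{i,j+1/2} − G_{i,j−1/2}). Assume ρⁿ_{ij} ≥ 0 for all i,j and the CFL conditions 2Δt·max(u_{i+1/2,j}⁺, −u_{i+1/2,j}⁻) ≤ Δx and 2Δt·max(v_{i,j+1/2}⁺, −v_{i,j+1/2}⁻) ≤ Δy at every interface. If one of the following holds: (i) ρ** = (ρⁿ + ρ^{n+1/2})/2 and ρ*** = (ρ^{n+1/2} + ρⁿ⁺¹)/2; (ii) ρ** = ρⁿ, ρ*** = ρ^{n+1/2}, and the kernel w is negative definite; (iii) ρ** = ρ^{n+1/2}, ρ*** = ρⁿ⁺¹, and the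 kernel w is positive definite; then E_Δ(ρⁿ⁺¹) ≤ E_Δ(ρⁿ). -/

import Mathlib

/-- The minmod limiter: `min` if all arguments are positive, `max` if all are negative,
and `0` otherwise. -/
noncomputable def minmod3 (a b c : ℝ) : ℝ :=
  if 0 < a ∧ 0 < b ∧ 0 < c then min a (min b c)
  else if a < 0 ∧ b < 0 ∧ c < 0 then max a (max b c)
  else 0

/-- The minmod mslope (θ = 2, mesh `dx`) of a vector `ρ` indexed by `1,…,N`:
interior cells `2 ≤ i ≤ N−1` use the minmod limiter; the first and last cells get `0`. -/
noncomputable def mslope (N : ℕ) (dx : ℝ) (ρ : ℕ → ℝ) (i : ℕ) : ℝ :=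
  if 2 ≤ i ∧ i ≤ N - 1 then
    minmod3 (2 * (ρ (i + 1) - ρ i) / dx)
      ((ρ (i + 1) - ρ (i - 1)) / (2 * dx))
      (2 * (ρ i - ρ (i - 1)) / dx)
  else 0

/-- East reconstruction: `ρᴱ_i = ρ_i + (dx/2)·σ_i`. -/
noncomputable def recE (N : ℕ) (dx : ℝ) (ρ : ℕ → ℝ) (i : ℕ) : ℝ :=
  ρ i + dx / 2 * mslope N dx ρ i

/-- West reconstruction: `ρᵂ_i = ρ_i − (dx/2)·σ_i`. -/
noncomputable def recW (N : ℕ) (dx : ℝ) (ρ : ℕ → ℝ) (i : ℕ) : ℝ :=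
  ρ i - dx / 2 * mslope N dx ρ i

/-- Positive part `z⁺ = max(z,0)`. -/
noncomputable def pospart (z : ℝ) : ℝ := max z 0

/-- Negative part `z⁻ = min(z,0)`. -/
noncomputable def negpart (z : ℝ) : ℝ := min z 0

/-- The two-dimensional discrete free energy
`E_Δ(ρ) = ΔxΔy·(∑ H(ρ_{ij}) + ∑ V_{ij}ρ_{ij} + (ΔxΔy/2)·∑ w(i−k,j−l)ρ_{ij}ρ_{kl})`. -/
noncomputable def Edisc2 (N : ℕ) (dx dy : ℝ) (H : ℝ → ℝ) (V : ℕ → ℕ → ℝ)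
    (w : ℤ → ℤ → ℝ) (ρ : ℕ → ℕ → ℝ) : ℝ :=
  dx * dy * ((∑ i ∈ Finset.Icc 1 N, ∑ j ∈ Finset.Icc 1 N, H (ρ i j))
    + (∑ i ∈ Finset.Icc 1 N, ∑ j ∈ Finset.Icc 1 N, V i j * ρ i j)
    + dx * dy / 2 * ∑ i ∈ Finset.Icc 1 N, ∑ j ∈ Finset.Icc 1 N,
        ∑ k ∈ Finset.Icc 1 N, ∑ l ∈ Finset.Icc 1 N,
          w ((i : ℤ) - (k : ℤ)) ((j : ℤ) - (l : ℤ)) * ρ i j * ρ k l)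

/-- The kernel `w` is negative definite: `∑ w(i−k,j−l)(a_{ij}−b_{ij})(a_{kl}−b_{kl}) ≤ 0`
for all matrices `a, b` with nonnegative entries. -/
def NegDefKer2 (N : ℕ) (w : ℤ → ℤ → ℝ) : Prop :=
  ∀ a b : ℕ → ℕ → ℝ,
    (∀ i j, 1 ≤ i → i ≤ N → 1 ≤ j → j ≤ N → 0 ≤ a i j) →
    (∀ i j, 1 ≤ i → i ≤ N → 1 ≤ j → j ≤ N → 0 ≤ b i j) →
    ∑ i ∈ Finset.Icc 1 N, ∑ j ∈ Finset.Icc 1 N,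
      ∑ k ∈ Finset.Icc 1 N, ∑ l ∈ Finset.Icc 1 N,
        w ((i : ℤ) - (k : ℤ)) ((j : ℤ) - (l : ℤ))
          * (a i j - b i j) * (a k l - b k l) ≤ 0

/-- The kernel `w` is positive definite: `∑ w(i−k,j−l)(a_{ij}−b_{ij})(a_{kl}−b_{kl}) ≥ 0`
for all matrices `a, b` with nonnegative entries. -/
def PosDefKer2 (N : ℕ) (w : ℤ → ℤ → ℝ) : Prop :=
  ∀ a b : ℕ → ℕ → ℝ,
    (∀ i j, 1 ≤ i → i ≤ N → 1 ≤ j → j ≤ N → 0 ≤ a i j) →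
    (∀ i j, 1 ≤ i → i ≤ N → 1 ≤ j → j ≤ N → 0 ≤ b i j) →
    0 ≤ ∑ i ∈ Finset.Icc 1 N, ∑ j ∈ Finset.Icc 1 N,
      ∑ k ∈ Finset.Icc 1 N, ∑ l ∈ Finset.Icc 1 N,
        w ((i : ℤ) - (k : ℤ)) ((j : ℤ) - (l : ℤ))
          * (a i j - b i j) * (a k l - b k l)

/-! Each half step decreases the energy. The minmod reconstructions of a nonnegative density are
nonnegative, so the flux through an interface has the sign of the velocity `-Δξ/Δx`, where `ξ` is
the discrete chemical potential, and summation by parts gives `∑ ξ (ρ' - ρ) ≤ 0`; the CFL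
condition keeps `ρ'` nonnegative, as the next half step and the definiteness of `w` require.
Convexity bounds `H(ρ') - H(ρ)` by `H'(ρ')(ρ' - ρ)`, and writing `ρs = ρ + θ (ρ' - ρ)`, the
interaction energy exceeds its linearisation by `(1/2 - θ) Q(ρ' - ρ, ρ' - ρ)`, which vanishes for
`θ = 1/2` and is nonpositive for `θ = 0` (resp. `θ = 1`) when `w` is negative (resp. positive)
definite. -/
open Finset

theorem le_minmod3_of_neg {a b c : ℝ} (h : minmod3 a b c < 0) : a ≤ minmod3 a b c := by
  unfold minmod3 at *
  split_ifs at * with hpos hneg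
  · exact absurd h (lt_min hpos.1 (lt_min hpos.2.1 hpos.2.2)).not_gt
  · exact le_max_left _ _
  · exact absurd h (lt_irrefl _)

theorem minmod3_le_of_pos {a b c : ℝ} (h : 0 < minmod3 a b c) : minmod3 a b c ≤ c := by
  unfold minmod3 at *
  split_ifs at * with hpos hneg
  · exact (min_le_right _ _).trans (min_le_right _ _)
  · exact absurd h (max_lt hneg.1 (max_lt hneg.2.1 hneg.2.2)).not_gt
  · exact absurd h (lt_irrefl _)

section Reconstruction

variable {N : ℕ} {dx : ℝ} {ρ : ℕ → ℝ} {i : ℕ}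

theorem recE_add_recW : recE N dx ρ i + recW N dx ρ i = 2 * ρ i := by
  unfold recE recW; ring

theorem recE_nonneg (hdx : 0 < dx) (hρ : ∀ i, 1 ≤ i → i ≤ N → 0 ≤ ρ i) (hi : 1 ≤ i)
    (hiN : i ≤ N) : 0 ≤ recE N dx ρ i := by
  have hρi := hρ i hi hiN
  unfold recE mslope
  split_ifs with hint
  · rcases le_or_gt 0 (minmod3 (2 * (ρ (i + 1) - ρ i) / dx) ((ρ (i + 1) - ρ (i - 1)) / (2 * dx))
        (2 * (ρ i - ρ (i - 1)) / dx)) with hσ | hσ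
    · positivity
    · have hle := mul_le_mul_of_nonneg_left (le_minmod3_of_neg hσ) (by positivity : 0 ≤ dx / 2)
      have hfwd : dx / 2 * (2 * (ρ (i + 1) - ρ i) / dx) = ρ (i + 1) - ρ i := by field_simp
      linarith [hρ (i + 1) (by omega) (by omega)]
  · simpa using hρi

theorem recW_nonneg (hdx : 0 < dx) (hρ : ∀ i, 1 ≤ i → i ≤ N → 0 ≤ ρ i) (hi : 1 ≤ i)
    (hiN : i ≤ N) : 0 ≤ recW N dx ρ i := by
  have hρi := hρ i hi hiN
  unfold recW mslope
  split_ifs with hint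
  · rcases le_or_gt (minmod3 (2 * (ρ (i + 1) - ρ i) / dx) ((ρ (i + 1) - ρ (i - 1)) / (2 * dx))
        (2 * (ρ i - ρ (i - 1)) / dx)) 0 with hσ | hσ
    · nlinarith
    · have hle := mul_le_mul_of_nonneg_left (minmod3_le_of_pos hσ) (by positivity : 0 ≤ dx / 2)
      have hbwd : dx / 2 * (2 * (ρ i - ρ (i - 1)) / dx) = ρ i - ρ (i - 1) := by field_simp
      linarith [hρ (i - 1) (by omega) (by omega)]
  · simpa using hρi

end Reconstruction

section Interface

variable {a b u dx dt : ℝ}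

theorem mul_upwind_nonneg (ha : 0 ≤ a) (hb : 0 ≤ b) :
    0 ≤ u * (a * pospart u + b * negpart u) := by
  unfold pospart negpart
  rcases le_total u 0 with hu | hu
  · rw [max_eq_right hu, min_eq_left hu]; nlinarith [mul_nonneg hb (mul_self_nonneg u)]
  · rw [max_eq_left hu, min_eq_right hu]; nlinarith [mul_nonneg ha (mul_self_nonneg u)]

theorem upwind_flux_le (ha : 0 ≤ a) (hb : 0 ≤ b) (hdx : 0 < dx) (hdt : 0 ≤ dt)
    (hCFL : 2 * dt * max (pospart u) (-negpart u) ≤ dx) :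
    dt / dx * (a * pospart u + b * negpart u) ≤ a / 2 := by
  have hp : dt / dx * pospart u ≤ 1 / 2 := by
    rw [div_mul_eq_mul_div, div_le_iff₀ hdx]
    nlinarith [le_max_left (pospart u) (-negpart u)]
  have hn : dt / dx * negpart u ≤ 0 :=
    mul_nonpos_of_nonneg_of_nonpos (by positivity) (min_le_right _ _)
  nlinarith [mul_le_mul_of_nonneg_left hp ha, mul_nonpos_of_nonneg_of_nonpos hb hn]

theorem neg_le_upwind_flux (ha : 0 ≤ a) (hb : 0 ≤ b) (hdx : 0 < dx) (hdt : 0 ≤ dt)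
    (hCFL : 2 * dt * max (pospart u) (-negpart u) ≤ dx) :
    -(b / 2) ≤ dt / dx * (a * pospart u + b * negpart u) := by
  have hn : -(1 / 2) ≤ dt / dx * negpart u := by
    rw [div_mul_eq_mul_div, le_div_iff₀ hdx]
    nlinarith [le_max_right (pospart u) (-negpart u)]
  have hp : 0 ≤ dt / dx * pospart u := mul_nonneg (by positivity) (le_max_right _ _)
  nlinarith [mul_le_mul_of_nonneg_left hn hb, mul_nonneg ha hp]

end Interface

theorem sum_Icc_mul_sub_pred_eq (ξ F : ℕ → ℝ) (n : ℕ) :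
    ∑ i ∈ Icc 1 (n + 1), ξ i * (F i - F (i - 1)) =
      ξ (n + 1) * F (n + 1) - ξ 1 * F 0 + ∑ i ∈ Icc 1 n, (ξ i - ξ (i + 1)) * F i := by
  induction n with
  | zero =>
    simp only [zero_add, Icc_self, sum_singleton, tsub_self, Order.lt_one_iff,
      Icc_eq_empty_of_lt, sum_empty, add_zero]
    ring
  | succ n ih =>
    rw [sum_Icc_succ_top (by omega), ih, sum_Icc_succ_top (by omega : 1 ≤ n + 1)]
    simp only [Nat.add_sub_cancel]
    ring

theorem sum_Icc_mul_sub_pred_eq_of_zero (ξ F : ℕ → ℝ) (n : ℕ) (hF0 : F 0 = 0)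
    (hFn : F n = 0) :
    ∑ i ∈ Icc 1 n, ξ i * (F i - F (i - 1)) = ∑ i ∈ Icc 1 (n - 1), (ξ i - ξ (i + 1)) * F i := by
  rcases n with _ | n
  · simp
  · rw [sum_Icc_mul_sub_pred_eq, hF0, hFn, Nat.add_sub_cancel]; ring

/-- `F i` is the flux through the interface `i + 1/2`. -/
structure IsUpwindStep (N : ℕ) (dx dt : ℝ) (ρ ρ' u F : ℕ → ℝ) : Prop where
  flux : ∀ i, 1 ≤ i → i ≤ N - 1 →
    F i = recE N dx ρ i * pospart (u i) + recW N dx ρ (i + 1) * negpart (u i)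
  flux_zero : F 0 = 0
  flux_last : F N = 0
  update : ∀ i, 1 ≤ i → i ≤ N → ρ' i = ρ i - dt / dx * (F i - F (i - 1))

namespace IsUpwindStep

variable {N : ℕ} {dx dt : ℝ} {ρ ρ' u F : ℕ → ℝ}

theorem nonneg (hS : IsUpwindStep N dx dt ρ ρ' u F) (hdx : 0 < dx) (hdt : 0 ≤ dt)
    (hρ : ∀ i, 1 ≤ i → i ≤ N → 0 ≤ ρ i)
    (hCFL : ∀ i, 1 ≤ i → i ≤ N - 1 → 2 * dt * max (pospart (u i)) (-negpart (u i)) ≤ dx)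
    {i : ℕ} (hi : 1 ≤ i) (hiN : i ≤ N) : 0 ≤ ρ' i := by
  -- each cell loses at most half of each of its two reconstructed values
  have hout : dt / dx * F i ≤ recE N dx ρ i / 2 := by
    rcases eq_or_lt_of_le hiN with rfl | hlt
    · rw [hS.flux_last, mul_zero]; linarith [recE_nonneg hdx hρ hi le_rfl]
    · rw [hS.flux i hi (by omega)]
      exact upwind_flux_le (recE_nonneg hdx hρ hi hiN) (recW_nonneg hdx hρ (by omega) (by omega))
        hdx hdt (hCFL i hi (by omega))
  have hin : -(recW N dx ρ i / 2) ≤ dt / dx * F (i - 1) := by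
    rcases eq_or_lt_of_le hi with rfl | hlt
    · rw [Nat.sub_self, hS.flux_zero, mul_zero]; linarith [recW_nonneg hdx hρ le_rfl hiN]
    · obtain ⟨k, rfl⟩ : ∃ k, i = k + 1 := ⟨i - 1, by omega⟩
      rw [Nat.add_sub_cancel, hS.flux k (by omega) (by omega)]
      exact neg_le_upwind_flux (recE_nonneg hdx hρ (by omega) (by omega))
        (recW_nonneg hdx hρ hi hiN) hdx hdt (hCFL k (by omega) (by omega))
  rw [hS.update i hi hiN]
  linarith [recE_add_recW (N := N) (dx := dx) (ρ := ρ) (i := i)]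

theorem sum_mul_sub_nonpos (hS : IsUpwindStep N dx dt ρ ρ' u F) (hdx : 0 < dx) (hdt : 0 ≤ dt)
    (hρ : ∀ i, 1 ≤ i → i ≤ N → 0 ≤ ρ i) {ξ : ℕ → ℝ}
    (hu : ∀ i, 1 ≤ i → i ≤ N - 1 → u i = -(ξ (i + 1) - ξ i) / dx) :
    ∑ i ∈ Icc 1 N, ξ i * (ρ' i - ρ i) ≤ 0 := by
  have hsum : ∑ i ∈ Icc 1 N, ξ i * (ρ' i - ρ i)
      = -(dt / dx) * ∑ i ∈ Icc 1 N, ξ i * (F i - F (i - 1)) := by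
    rw [mul_sum]
    refine sum_congr rfl fun i hi => ?_
    rw [mem_Icc] at hi
    rw [hS.update i hi.1 hi.2]
    ring
  rw [hsum, sum_Icc_mul_sub_pred_eq_of_zero ξ F N hS.flux_zero hS.flux_last]
  refine mul_nonpos_of_nonpos_of_nonneg (by have := div_nonneg hdt hdx.le; linarith)
    (sum_nonneg fun i hi => ?_)
  rw [mem_Icc] at hi
  have hξ : ξ i - ξ (i + 1) = dx * u i := by
    rw [hu i hi.1 hi.2]; field_simp; ring
  rw [hξ, hS.flux i hi.1 hi.2, mul_assoc]
  exact mul_nonneg hdx.le (mul_upwind_nonneg (recE_nonneg hdx hρ hi.1 (by omega))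
    (recW_nonneg hdx hρ (by omega) (by omega)))

end IsUpwindStep

noncomputable def interaction (N : ℕ) (w : ℤ → ℤ → ℝ) (a b : ℕ → ℕ → ℝ) : ℝ :=
  ∑ i ∈ Icc 1 N, ∑ j ∈ Icc 1 N, ∑ k ∈ Icc 1 N, ∑ l ∈ Icc 1 N,
    w ((i : ℤ) - (k : ℤ)) ((j : ℤ) - (l : ℤ)) * a i j * b k l

section Interaction

variable {N : ℕ} {w : ℤ → ℤ → ℝ}

theorem interaction_comm (hw1 : ∀ p q : ℤ, w (-p) q = w p q) (hw2 : ∀ p q : ℤ, w p (-q) = w p q)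
    (a b : ℕ → ℕ → ℝ) : interaction N w a b = interaction N w b a := by
  have hswap := sum_comm (s := Icc 1 N ×ˢ Icc 1 N) (t := Icc 1 N ×ˢ Icc 1 N)
    (f := fun p q => w ((p.1 : ℤ) - (q.1 : ℤ)) ((p.2 : ℤ) - (q.2 : ℤ)) * a p.1 p.2 * b q.1 q.2)
  simp only [sum_product] at hswap
  rw [interaction, hswap]
  refine sum_congr rfl fun i _ => sum_congr rfl fun j _ => sum_congr rfl fun k _ =>
    sum_congr rfl fun l _ => ?_
  rw [← hw1, ← hw2, neg_sub, neg_sub]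
  ring

theorem interaction_remainder_eq (hw1 : ∀ p q : ℤ, w (-p) q = w p q)
    (hw2 : ∀ p q : ℤ, w p (-q) = w p q) {ρ0 ρ1 ρs : ℕ → ℕ → ℝ} (θ : ℝ)
    (hs : ∀ i j, 1 ≤ i → i ≤ N → 1 ≤ j → j ≤ N → ρs i j = ρ0 i j + θ * (ρ1 i j - ρ0 i j)) :
    interaction N w ρ1 ρ1 / 2 - interaction N w ρ0 ρ0 / 2
        - interaction N w (fun i j => ρ1 i j - ρ0 i j) ρs
      = (1 / 2 - θ)
        * interaction N w (fun i j => ρ1 i j - ρ0 i j) (fun i j => ρ1 i j - ρ0 i j) := by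
  have hdiff : interaction N w ρ1 ρ1 / 2 - interaction N w ρ0 ρ0 / 2
        - interaction N w (fun i j => ρ1 i j - ρ0 i j) ρs
        - (1 / 2 - θ) * interaction N w (fun i j => ρ1 i j - ρ0 i j) (fun i j => ρ1 i j - ρ0 i j)
      = (interaction N w ρ0 (fun i j => ρ1 i j - ρ0 i j)
          - interaction N w (fun i j => ρ1 i j - ρ0 i j) ρ0) / 2 := by
    simp only [interaction, mul_sum, sum_div, ← sum_sub_distrib]
    refine sum_congr rfl fun i _ => sum_congr rfl fun j _ => sum_congr rfl fun k hk =>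
      sum_congr rfl fun l hl => ?_
    rw [mem_Icc] at hk hl
    rw [hs k l hk.1 hk.2 hl.1 hl.2]
    ring
  rwa [interaction_comm hw1 hw2 ρ0 (fun i j => ρ1 i j - ρ0 i j), sub_self, zero_div,
    sub_eq_zero] at hdiff

end Interaction

/-- `ρs` is the paper's `ρ**` (resp. `ρ***`) for a half step from `ρ0` to `ρ1`. -/
def IsStableConvolutionChoice (N : ℕ) (w : ℤ → ℤ → ℝ) (ρ0 ρ1 ρs : ℕ → ℕ → ℝ) : Prop :=
  (∀ i j, 1 ≤ i → i ≤ N → 1 ≤ j → j ≤ N → ρs i j = (ρ0 i j + ρ1 i j) / 2) ∨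
    ((∀ i j, 1 ≤ i → i ≤ N → 1 ≤ j → j ≤ N → ρs i j = ρ0 i j) ∧ NegDefKer2 N w) ∨
    ((∀ i j, 1 ≤ i → i ≤ N → 1 ≤ j → j ≤ N → ρs i j = ρ1 i j) ∧ PosDefKer2 N w)

theorem interaction_remainder_nonpos {N : ℕ} {w : ℤ → ℤ → ℝ}
    (hw1 : ∀ p q : ℤ, w (-p) q = w p q) (hw2 : ∀ p q : ℤ, w p (-q) = w p q)
    {ρ0 ρ1 ρs : ℕ → ℕ → ℝ} (hρ0 : ∀ i j, 1 ≤ i → i ≤ N → 1 ≤ j → j ≤ N → 0 ≤ ρ0 i j)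
    (hρ1 : ∀ i j, 1 ≤ i → i ≤ N → 1 ≤ j → j ≤ N → 0 ≤ ρ1 i j)
    (hs : IsStableConvolutionChoice N w ρ0 ρ1 ρs) :
    interaction N w ρ1 ρ1 / 2 - interaction N w ρ0 ρ0 / 2
      - interaction N w (fun i j => ρ1 i j - ρ0 i j) ρs ≤ 0 := by
  rcases hs with hs | ⟨hs, hneg⟩ | ⟨hs, hpos⟩
  · rw [interaction_remainder_eq hw1 hw2 (1 / 2) fun i j hi hi' hj hj' => by
      rw [hs i j hi hi' hj hj']; ring]
    simp
  · rw [interaction_remainder_eq hw1 hw2 0 fun i j hi hi' hj hj' => by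
      rw [hs i j hi hi' hj hj']; ring]
    have := hneg ρ1 ρ0 hρ1 hρ0
    unfold interaction
    linarith
  · rw [interaction_remainder_eq hw1 hw2 1 fun i j hi hi' hj hj' => by
      rw [hs i j hi hi' hj hj']; ring]
    have := hpos ρ1 ρ0 hρ1 hρ0
    unfold interaction
    linarith

theorem ConvexOn.sub_le_deriv_mul_sub {f : ℝ → ℝ} (hf : ConvexOn ℝ Set.univ f) {x y : ℝ}
    (hy : DifferentiableAt ℝ f y) : f y - f x ≤ deriv f y * (y - x) := by
  rcases lt_trichotomy x y with hxy | rfl | hxy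
  · have hslope := hf.slope_le_deriv (Set.mem_univ x) (Set.mem_univ y) hxy hy
    rw [slope_def_field, div_le_iff₀ (sub_pos.2 hxy)] at hslope
    exact hslope
  · simp
  · have hslope := hf.deriv_le_slope (Set.mem_univ y) (Set.mem_univ x) hxy hy
    rw [slope_def_field, le_div_iff₀ (sub_pos.2 hxy)] at hslope
    linarith

section Energy

variable {N : ℕ} {dx dy : ℝ} {H : ℝ → ℝ} {V : ℕ → ℕ → ℝ} {w : ℤ → ℤ → ℝ}
  {ρ0 ρ1 ρs ξ : ℕ → ℕ → ℝ}

theorem Edisc2_sub_eq (hξ : ∀ i j, 1 ≤ i → i ≤ N → 1 ≤ j → j ≤ N →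
      ξ i j = deriv H (ρ1 i j) + V i j
        + dx * dy * ∑ k ∈ Icc 1 N, ∑ l ∈ Icc 1 N,
            w ((i : ℤ) - (k : ℤ)) ((j : ℤ) - (l : ℤ)) * ρs k l) :
    Edisc2 N dx dy H V w ρ1 - Edisc2 N dx dy H V w ρ0
      = dx * dy * (∑ i ∈ Icc 1 N, ∑ j ∈ Icc 1 N, ξ i j * (ρ1 i j - ρ0 i j)
        + ∑ i ∈ Icc 1 N, ∑ j ∈ Icc 1 N,
            (H (ρ1 i j) - H (ρ0 i j) - deriv H (ρ1 i j) * (ρ1 i j - ρ0 i j))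
        + dx * dy * (interaction N w ρ1 ρ1 / 2 - interaction N w ρ0 ρ0 / 2
            - interaction N w (fun i j => ρ1 i j - ρ0 i j) ρs)) := by
  have hpot : ∑ i ∈ Icc 1 N, ∑ j ∈ Icc 1 N, ξ i j * (ρ1 i j - ρ0 i j)
      = ∑ i ∈ Icc 1 N, ∑ j ∈ Icc 1 N,
          (deriv H (ρ1 i j) * (ρ1 i j - ρ0 i j) + V i j * (ρ1 i j - ρ0 i j))
        + dx * dy * interaction N w (fun i j => ρ1 i j - ρ0 i j) ρs := by
    simp only [interaction, mul_sum, ← sum_add_distrib]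
    refine sum_congr rfl fun i hi => sum_congr rfl fun j hj => ?_
    rw [mem_Icc] at hi hj
    rw [hξ i j hi.1 hi.2 hj.1 hj.2, add_mul, add_mul]
    congr 1
    simp only [mul_sum, sum_mul]
    exact sum_congr rfl fun k _ => sum_congr rfl fun l _ => by ring
  rw [hpot]
  simp only [Edisc2, interaction, sum_add_distrib, sum_sub_distrib, mul_sub]
  ring

theorem Edisc2_le_of_sum_potential_mul_sub_nonpos (hdxdy : 0 ≤ dx * dy)
    (hH : ConvexOn ℝ Set.univ H) (hH' : Differentiable ℝ H)
    (hw1 : ∀ p q : ℤ, w (-p) q = w p q) (hw2 : ∀ p q : ℤ, w p (-q) = w p q)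
    (hξ : ∀ i j, 1 ≤ i → i ≤ N → 1 ≤ j → j ≤ N →
      ξ i j = deriv H (ρ1 i j) + V i j
        + dx * dy * ∑ k ∈ Icc 1 N, ∑ l ∈ Icc 1 N,
            w ((i : ℤ) - (k : ℤ)) ((j : ℤ) - (l : ℤ)) * ρs k l)
    (hρ0 : ∀ i j, 1 ≤ i → i ≤ N → 1 ≤ j → j ≤ N → 0 ≤ ρ0 i j)
    (hρ1 : ∀ i j, 1 ≤ i → i ≤ N → 1 ≤ j → j ≤ N → 0 ≤ ρ1 i j)
    (hs : IsStableConvolutionChoice N w ρ0 ρ1 ρs)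
    (hdiss : ∑ i ∈ Icc 1 N, ∑ j ∈ Icc 1 N, ξ i j * (ρ1 i j - ρ0 i j) ≤ 0) :
    Edisc2 N dx dy H V w ρ1 ≤ Edisc2 N dx dy H V w ρ0 := by
  have hconv : ∑ i ∈ Icc 1 N, ∑ j ∈ Icc 1 N,
      (H (ρ1 i j) - H (ρ0 i j) - deriv H (ρ1 i j) * (ρ1 i j - ρ0 i j)) ≤ 0 :=
    sum_nonpos fun i _ => sum_nonpos fun j _ =>
      sub_nonpos.2 (hH.sub_le_deriv_mul_sub (hH' _))
  have hint := mul_nonpos_of_nonneg_of_nonpos hdxdy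
    (interaction_remainder_nonpos hw1 hw2 hρ0 hρ1 hs)
  have hsum := mul_nonpos_of_nonneg_of_nonpos hdxdy (add_nonpos (add_nonpos hdiss hconv) hint)
  linarith [Edisc2_sub_eq (ρ0 := ρ0) hξ]

end Energy

theorem stmt_11_general (N : ℕ) (dx dy dt : ℝ)
    (hdx : 0 < dx) (hdy : 0 < dy) (hdt : 0 < dt)
    (H : ℝ → ℝ) (hHconv : ConvexOn ℝ Set.univ H) (hHdiff : Differentiable ℝ H)
    (V : ℕ → ℕ → ℝ) (w : ℤ → ℤ → ℝ)
    (hw1 : ∀ p q : ℤ, w (-p) q = w p q) (hw2 : ∀ p q : ℤ, w p (-q) = w p q)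
    (ρn ρh ρn1 ρss ρsss ξh ξ1 u v F G : ℕ → ℕ → ℝ)
    -- Step 1: evolution in the x-direction
    (hξh : ∀ i j, 1 ≤ i → i ≤ N → 1 ≤ j → j ≤ N →
      ξh i j = deriv H (ρh i j) + V i j
        + dx * dy * ∑ k ∈ Finset.Icc 1 N, ∑ l ∈ Finset.Icc 1 N,
            w ((i : ℤ) - (k : ℤ)) ((j : ℤ) - (l : ℤ)) * ρss k l)
    (hu : ∀ i j, 1 ≤ i → i ≤ N - 1 → 1 ≤ j → j ≤ N →
      u i j = -(ξh (i + 1) j - ξh i j) / dx)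
    (hF : ∀ i j, 1 ≤ i → i ≤ N - 1 → 1 ≤ j → j ≤ N →
      F i j = recE N dx (fun i' => ρn i' j) i * pospart (u i j)
        + recW N dx (fun i' => ρn i' j) (i + 1) * negpart (u i j))
    (hF0 : ∀ j, 1 ≤ j → j ≤ N → F 0 j = 0)
    (hFN : ∀ j, 1 ≤ j → j ≤ N → F N j = 0)
    (hupd1 : ∀ i j, 1 ≤ i → i ≤ N → 1 ≤ j → j ≤ N →
      ρh i j = ρn i j - dt / dx * (F i j - F (i - 1) j))
    -- Step 2: evolution in the y-direction
    (hξ1 : ∀ i j, 1 ≤ i → i ≤ N → 1 ≤ j → j ≤ N →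
      ξ1 i j = deriv H (ρn1 i j) + V i j
        + dx * dy * ∑ k ∈ Finset.Icc 1 N, ∑ l ∈ Finset.Icc 1 N,
            w ((i : ℤ) - (k : ℤ)) ((j : ℤ) - (l : ℤ)) * ρsss k l)
    (hv : ∀ i j, 1 ≤ i → i ≤ N → 1 ≤ j → j ≤ N - 1 →
      v i j = -(ξ1 i (j + 1) - ξ1 i j) / dy)
    (hG : ∀ i j, 1 ≤ i → i ≤ N → 1 ≤ j → j ≤ N - 1 →
      G i j = recE N dy (fun j' => ρh i j') j * pospart (v i j)
        + recW N dy (fun j' => ρh i j') (j + 1) * negpart (v i j))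
    (hG0 : ∀ i, 1 ≤ i → i ≤ N → G i 0 = 0)
    (hGN : ∀ i, 1 ≤ i → i ≤ N → G i N = 0)
    (hupd2 : ∀ i j, 1 ≤ i → i ≤ N → 1 ≤ j → j ≤ N →
      ρn1 i j = ρh i j - dt / dy * (G i j - G i (j - 1)))
    (hpos : ∀ i j, 1 ≤ i → i ≤ N → 1 ≤ j → j ≤ N → 0 ≤ ρn i j)
    (hCFLu : ∀ i j, 1 ≤ i → i ≤ N - 1 → 1 ≤ j → j ≤ N →
      2 * dt * max (pospart (u i j)) (-negpart (u i j)) ≤ dx)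
    (hCFLv : ∀ i j, 1 ≤ i → i ≤ N → 1 ≤ j → j ≤ N - 1 →
      2 * dt * max (pospart (v i j)) (-negpart (v i j)) ≤ dy)
    (hcase :
      ((∀ i j, 1 ≤ i → i ≤ N → 1 ≤ j → j ≤ N → ρss i j = (ρn i j + ρh i j) / 2) ∧
        (∀ i j, 1 ≤ i → i ≤ N → 1 ≤ j → j ≤ N → ρsss i j = (ρh i j + ρn1 i j) / 2)) ∨
      ((∀ i j, 1 ≤ i → i ≤ N → 1 ≤ j → j ≤ N → ρss i j = ρn i j) ∧
        (∀ i j, 1 ≤ i → i ≤ N → 1 ≤ j → j ≤ N → ρsss i j = ρh i j) ∧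
        NegDefKer2 N w) ∨
      ((∀ i j, 1 ≤ i → i ≤ N → 1 ≤ j → j ≤ N → ρss i j = ρh i j) ∧
        (∀ i j, 1 ≤ i → i ≤ N → 1 ≤ j → j ≤ N → ρsss i j = ρn1 i j) ∧
        PosDefKer2 N w)) :
    Edisc2 N dx dy H V w ρn1 ≤ Edisc2 N dx dy H V w ρn := by
  obtain ⟨hsx, hsy⟩ : IsStableConvolutionChoice N w ρn ρh ρss ∧
      IsStableConvolutionChoice N w ρh ρn1 ρsss := by
    rcases hcase with ⟨h1, h2⟩ | ⟨h1, h2, hk⟩ | ⟨h1, h2, hk⟩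
    exacts [⟨.inl h1, .inl h2⟩, ⟨.inr (.inl ⟨h1, hk⟩), .inr (.inl ⟨h2, hk⟩)⟩,
      ⟨.inr (.inr ⟨h1, hk⟩), .inr (.inr ⟨h2, hk⟩)⟩]
  have hx : ∀ j, 1 ≤ j → j ≤ N → IsUpwindStep N dx dt (ρn · j) (ρh · j) (u · j) (F · j) :=
    fun j hj hj' => ⟨fun i hi hi' => hF i j hi hi' hj hj', hF0 j hj hj', hFN j hj hj',
      fun i hi hi' => hupd1 i j hi hi' hj hj'⟩
  have hy : ∀ i, 1 ≤ i → i ≤ N → IsUpwindStep N dy dt (ρh i ·) (ρn1 i ·) (v i ·) (G i ·) :=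
    fun i hi hi' => ⟨fun j hj hj' => hG i j hi hi' hj hj', hG0 i hi hi', hGN i hi hi',
      fun j hj hj' => hupd2 i j hi hi' hj hj'⟩
  have hposh : ∀ i j, 1 ≤ i → i ≤ N → 1 ≤ j → j ≤ N → 0 ≤ ρh i j :=
    fun i j hi hi' hj hj' => (hx j hj hj').nonneg hdx hdt.le (hpos · j · · hj hj')
      (hCFLu · j · · hj hj') hi hi'
  have hposn1 : ∀ i j, 1 ≤ i → i ≤ N → 1 ≤ j → j ≤ N → 0 ≤ ρn1 i j :=
    fun i j hi hi' hj hj' => (hy i hi hi').nonneg hdy hdt.le (hposh i · hi hi' · ·)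
      (hCFLv i · hi hi' · ·) hj hj'
  have hdissx : ∑ i ∈ Icc 1 N, ∑ j ∈ Icc 1 N, ξh i j * (ρh i j - ρn i j) ≤ 0 := by
    rw [sum_comm]
    exact sum_nonpos fun j hj => (hx j (mem_Icc.1 hj).1 (mem_Icc.1 hj).2).sum_mul_sub_nonpos
      hdx hdt.le (hpos · j · · (mem_Icc.1 hj).1 (mem_Icc.1 hj).2)
      (hu · j · · (mem_Icc.1 hj).1 (mem_Icc.1 hj).2)
  have hdissy : ∑ i ∈ Icc 1 N, ∑ j ∈ Icc 1 N, ξ1 i j * (ρn1 i j - ρh i j) ≤ 0 :=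
    sum_nonpos fun i hi => (hy i (mem_Icc.1 hi).1 (mem_Icc.1 hi).2).sum_mul_sub_nonpos
      hdy hdt.le (hposh i · (mem_Icc.1 hi).1 (mem_Icc.1 hi).2 · ·)
      (hv i · (mem_Icc.1 hi).1 (mem_Icc.1 hi).2 · ·)
  have hdxdy := (mul_pos hdx hdy).le
  exact (Edisc2_le_of_sum_potential_mul_sub_nonpos hdxdy hHconv hHdiff hw1 hw2 hξ1 hposh hposn1
    hsy hdissy).trans
    (Edisc2_le_of_sum_potential_mul_sub_nonpos hdxdy hHconv hHdiff hw1 hw2 hξh hpos hposh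
      hsx hdissx)

/-- energy dissipation for the two-dimensional dimensionally-split scheme
S1 under the CFL conditions, for each of the three admissible choices of the convolution
variables `ρ**` and `ρ***`. -/
theorem stmt_11 (N : ℕ) (hN : 2 ≤ N) (dx dy dt : ℝ)
    (hdx : 0 < dx) (hdy : 0 < dy) (hdt : 0 < dt)
    (H : ℝ → ℝ) (hHconv : ConvexOn ℝ Set.univ H) (hHdiff : Differentiable ℝ H)
    (V : ℕ → ℕ → ℝ) (w : ℤ → ℤ → ℝ)
    (hw1 : ∀ p q : ℤ, w (-p) q = w p q) (hw2 : ∀ p q : ℤ, w p (-q) = w p q)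
    (ρn ρh ρn1 ρss ρsss ξh ξ1 u v F G : ℕ → ℕ → ℝ)
    -- Step 1: evolution in the x-direction
    (hξh : ∀ i j, 1 ≤ i → i ≤ N → 1 ≤ j → j ≤ N →
      ξh i j = deriv H (ρh i j) + V i j
        + dx * dy * ∑ k ∈ Finset.Icc 1 N, ∑ l ∈ Finset.Icc 1 N,
            w ((i : ℤ) - (k : ℤ)) ((j : ℤ) - (l : ℤ)) * ρss k l)
    (hu : ∀ i j, 1 ≤ i → i ≤ N - 1 → 1 ≤ j → j ≤ N →
      u i j = -(ξh (i + 1) j - ξh i j) / dx)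
    (hF : ∀ i j, 1 ≤ i → i ≤ N - 1 → 1 ≤ j → j ≤ N →
      F i j = recE N dx (fun i' => ρn i' j) i * pospart (u i j)
        + recW N dx (fun i' => ρn i' j) (i + 1) * negpart (u i j))
    (hF0 : ∀ j, 1 ≤ j → j ≤ N → F 0 j = 0)
    (hFN : ∀ j, 1 ≤ j → j ≤ N → F N j = 0)
    (hupd1 : ∀ i j, 1 ≤ i → i ≤ N → 1 ≤ j → j ≤ N →
      ρh i j = ρn i j - dt / dx * (F i j - F (i - 1) j))
    -- Step 2: evolution in the y-direction
    (hξ1 : ∀ i j, 1 ≤ i → i ≤ N → 1 ≤ j → j ≤ N →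
      ξ1 i j = deriv H (ρn1 i j) + V i j
        + dx * dy * ∑ k ∈ Finset.Icc 1 N, ∑ l ∈ Finset.Icc 1 N,
            w ((i : ℤ) - (k : ℤ)) ((j : ℤ) - (l : ℤ)) * ρsss k l)
    (hv : ∀ i j, 1 ≤ i → i ≤ N → 1 ≤ j → j ≤ N - 1 →
      v i j = -(ξ1 i (j + 1) - ξ1 i j) / dy)
    (hG : ∀ i j, 1 ≤ i → i ≤ N → 1 ≤ j → j ≤ N - 1 →
      G i j = recE N dy (fun j' => ρh i j') j * pospart (v i j)
        + recW N dy (fun j' => ρh i j') (j + 1) * negpart (v i j))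
    (hG0 : ∀ i, 1 ≤ i → i ≤ N → G i 0 = 0)
    (hGN : ∀ i, 1 ≤ i → i ≤ N → G i N = 0)
    (hupd2 : ∀ i j, 1 ≤ i → i ≤ N → 1 ≤ j → j ≤ N →
      ρn1 i j = ρh i j - dt / dy * (G i j - G i (j - 1)))
    (hpos : ∀ i j, 1 ≤ i → i ≤ N → 1 ≤ j → j ≤ N → 0 ≤ ρn i j)
    (hCFLu : ∀ i j, 1 ≤ i → i ≤ N - 1 → 1 ≤ j → j ≤ N →
      2 * dt * max (pospart (u i j)) (-negpart (u i j)) ≤ dx)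
    (hCFLv : ∀ i j, 1 ≤ i → i ≤ N → 1 ≤ j → j ≤ N - 1 →
      2 * dt * max (pospart (v i j)) (-negpart (v i j)) ≤ dy)
    (hcase :
      ((∀ i j, 1 ≤ i → i ≤ N → 1 ≤ j → j ≤ N → ρss i j = (ρn i j + ρh i j) / 2) ∧
        (∀ i j, 1 ≤ i → i ≤ N → 1 ≤ j → j ≤ N → ρsss i j = (ρh i j + ρn1 i j) / 2)) ∨
      ((∀ i j, 1 ≤ i → i ≤ N → 1 ≤ j → j ≤ N → ρss i j = ρn i j) ∧
        (∀ i j, 1 ≤ i → i ≤ N → 1 ≤ j → j ≤ N → ρsss i j = ρh i j) ∧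
        NegDefKer2 N w) ∨
      ((∀ i j, 1 ≤ i → i ≤ N → 1 ≤ j → j ≤ N → ρss i j = ρh i j) ∧
        (∀ i j, 1 ≤ i → i ≤ N → 1 ≤ j → j ≤ N → ρsss i j = ρn1 i j) ∧
        PosDefKer2 N w)) :
    Edisc2 N dx dy H V w ρn1 ≤ Edisc2 N dx dy H V w ρn :=
  stmt_11_general N dx dy dt hdx hdy hdt H hHconv hHdiff V w hw1 hw2 ρn ρh ρn1 ρss ρsss ξh ξ1 u v F
    G hξh hu hF hF0 hFN hupd1 hξ1 hv hG hG0 hGN hupd2 hpos hCFLu hCFLv hcase
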